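/- Let N ≥ 1 and let x_j = cos(jπ/N) for j = 0, …, N be the Chebyshev–Gauss–Lobatto points. Define c̄₀ = c̄_N = 2 and c̄_j = 1 for 0 < j < N, and define the (N+1) × (N+1) real matrix D by D_{lm} = (c̄_l (−1)^{l+m}) / (c̄_m (x_l − x_m)) for l ≠ m, and D_{ll} = −Σ_{m ≠ l} D_{lm}. Then for every polynomial p ∈ ℝ[X] (or ℂ[X]) with deg p ≤ N and every l ∈ {0, …, N}, p′(x_l) = Σ_{m=0}^{N} D_{lm} p(x_m). -/

import Mathlib

/-!
Lagrange interpolation on the `N + 1` distinct nodes reproduces `p`, so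
`p'(x_l) = ∑ m, ℓ_m'(x_l) p(x_m)`. Writing `w` for the nodal polynomial, `ℓ_m'(x_l)` equals
`w'(x_l) / ((x_l - x_m) w'(x_m))` for `l ≠ m`, and `∑ m, ℓ_m = 1` yields the diagonal.
For the Gauss–Lobatto points, `(1 - X²) T_N'` has degree `N + 1` and vanishes at every node
(at `x = cos θ` it equals `N sin θ sin Nθ`), hence is a multiple of `w`. Chebyshev's equation
`(1 - x²) T_N'' = x T_N' - N² T_N` evaluates its derivative at `x_j` to `-c̄_j N² (-1)^j`, so
`w'(x_j)` is proportional to `c̄_j (-1)^j`, which makes `D` the Lagrange differentiation matrix.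
-/

open Finset Polynomial Lagrange

namespace Lagrange

variable {F ι : Type*} [Field F] {s : Finset ι} {v : ι → F}

theorem eq_C_mul_nodal_of_eval_eq_zero (hvs : Set.InjOn v s) {p : F[X]}
    (hp : p.natDegree ≤ #s) (hzero : ∀ j ∈ s, p.eval (v j) = 0) :
    p = C (p.coeff #s) * nodal s v := by
  rw [← sub_eq_zero]
  refine eq_zero_of_degree_lt_of_eval_index_eq_zero s hvs ?_ fun j hj => ?_
  · rw [degree_lt_iff_coeff_zero]
    intro m hm
    rcases hm.eq_or_lt with rfl | hm
    · have hw : (nodal s v).coeff #s = 1 := by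
        simpa [natDegree_nodal] using (nodal_monic (s := s) (v := v)).coeff_natDegree
      simp [hw]
    · rw [coeff_sub, coeff_C_mul, coeff_eq_zero_of_natDegree_lt (hp.trans_lt hm),
        coeff_eq_zero_of_natDegree_lt (p := nodal s v) (by rwa [natDegree_nodal]), mul_zero,
        sub_zero]
  · simp [hzero j hj, eval_nodal_at_node hj]

section

variable [DecidableEq ι] {i j : ι}

theorem eval_derivative_nodal_erase_of_ne (hi : i ∈ s) (hj : j ∈ s) (hij : i ≠ j) :
    (v i - v j) * (derivative (nodal (s.erase j) v)).eval (v i) =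
      (derivative (nodal s v)).eval (v i) := by
  rw [eval_nodal_derivative_eval_node_eq hi,
    eval_nodal_derivative_eval_node_eq (mem_erase.mpr ⟨hij, hi⟩), erase_right_comm,
    nodal_eq_mul_nodal_erase (mem_erase.mpr ⟨hij.symm, hj⟩)]
  simp

theorem eval_derivative_basis_of_ne (hvs : Set.InjOn v s) (hi : i ∈ s) (hj : j ∈ s)
    (hij : i ≠ j) :
    (derivative (Lagrange.basis s v j)).eval (v i) =
      (derivative (nodal s v)).eval (v i) /
        ((v i - v j) * (derivative (nodal s v)).eval (v j)) := by
  have hvij : v i - v j ≠ 0 := sub_ne_zero.mpr fun h => hij (hvs hi hj h)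
  rw [basis_eq_prod_sub_inv_mul_nodal_div hj, ← nodal_erase_eq_nodal_div hj,
    nodalWeight_eq_eval_derivative_nodal hj, derivative_C_mul, eval_mul, eval_C,
    ← eval_derivative_nodal_erase_of_ne hi hj hij]
  field_simp

theorem sum_eval_derivative_basis (hvs : Set.InjOn v s) (hs : s.Nonempty) (x : F) :
    ∑ j ∈ s, (derivative (Lagrange.basis s v j)).eval x = 0 := by
  rw [← eval_finsetSum, ← derivative_sum, sum_basis hvs hs, derivative_one, eval_zero]

theorem eval_derivative_eq_sum_of_degree_lt (hvs : Set.InjOn v s) {p : F[X]}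
    (hp : p.degree < #s) (x : F) :
    (derivative p).eval x =
      ∑ j ∈ s, (derivative (Lagrange.basis s v j)).eval x * p.eval (v j) := by
  conv_lhs => rw [eq_interpolate hvs hp, interpolate_apply]
  simp [eval_finsetSum, mul_comm]

/-- Only the ratios of the weights `a` enter `D`, hence the free scalar `α`. -/
theorem eval_derivative_eq_sum_of_barycentric_weights (hvs : Set.InjOn v s)
    {a : ι → F} {α : F} (hα : α ≠ 0) (ha : ∀ j ∈ s, a j = α * (derivative (nodal s v)).eval (v j))
    {D : ι → ι → F} (hoff : ∀ i ∈ s, ∀ j ∈ s, i ≠ j → D i j = a i / ((v i - v j) * a j))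
    (hdiag : ∀ i ∈ s, D i i = -∑ j ∈ s.erase i, D i j)
    {p : F[X]} (hp : p.degree < #s) (hi : i ∈ s) :
    (derivative p).eval (v i) = ∑ j ∈ s, D i j * p.eval (v j) := by
  have hD : ∀ j ∈ s, j ≠ i → D i j = (derivative (Lagrange.basis s v j)).eval (v i) := by
    intro j hj hji
    rw [hoff i hi j hj hji.symm, eval_derivative_basis_of_ne hvs hi hj hji.symm, ha i hi, ha j hj]
    field_simp
  have hDii : D i i = (derivative (Lagrange.basis s v i)).eval (v i) := by
    have hsum := sum_eval_derivative_basis hvs ⟨i, hi⟩ (v i)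
    rw [← add_sum_erase _ _ hi] at hsum
    rw [hdiag i hi, sum_congr rfl fun j hj => hD j (mem_of_mem_erase hj) (ne_of_mem_erase hj)]
    linear_combination -hsum
  rw [eval_derivative_eq_sum_of_degree_lt hvs hp]
  refine sum_congr rfl fun j hj => ?_
  rcases eq_or_ne j i with rfl | hji
  · rw [hDii]
  · rw [hD j hj hji]

end

end Lagrange

namespace Polynomial.Chebyshev

theorem derivative_T_eval_neg_one (R : Type*) [CommRing R] (n : ℤ) :
    (derivative (T R n)).eval (-1) = -(n.negOnePow * n ^ 2 : R) := by
  rw [T_derivative_eq_U, eval_mul, eval_intCast, U_eval_neg_one, Int.negOnePow_sub,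
    Int.negOnePow_one]
  push_cast
  ring

theorem derivative_one_sub_X_sq_mul_derivative_T (R : Type*) [CommRing R] (n : ℤ) :
    derivative ((1 - X ^ 2) * derivative (T R n)) =
      -(X * derivative (T R n) + (n ^ 2 : R[X]) * T R n) := by
  have h := one_sub_X_sq_mul_derivative_derivative_T_eq_poly_in_T (R := R) n
  rw [Function.iterate_succ, Function.iterate_one, Function.comp_apply] at h
  rw [derivative_mul, h]
  simp only [derivative_sub, derivative_one, derivative_X_pow_succ, Nat.cast_one, map_add, map_one,
    pow_one, zero_sub]
  ring

theorem natDegree_one_sub_X_sq_mul_derivative_T_le (R : Type*) [CommRing R] [IsDomain R]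
    [NeZero (2 : R)] (n : ℕ) :
    ((1 - X ^ 2) * derivative (T R n)).natDegree ≤ n + 1 := by
  rcases n with _ | n
  · simp
  calc ((1 - X ^ 2) * derivative (T R (n + 1 : ℕ))).natDegree
      ≤ (1 - X ^ 2 : R[X]).natDegree + (derivative (T R (n + 1 : ℕ))).natDegree :=
        natDegree_mul_le
    _ ≤ 2 + n := by
        gcongr
        · exact (natDegree_sub_le _ _).trans (by simp)
        · exact (natDegree_derivative_le _).trans (by rw [natDegree_T, Int.natAbs_natCast]; omega)
    _ = n + 1 + 1 := by ring

theorem eval_one_sub_X_sq_mul_derivative_T_node (N i : ℕ) :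
    ((1 - X ^ 2) * derivative (T ℝ N)).eval (node N i) = 0 := by
  have hsin : Real.sin (N * (i * Real.pi / N)) = 0 := by
    rcases eq_or_ne N 0 with rfl | hN
    · simp
    · rw [mul_div_cancel₀ _ (by exact_mod_cast hN), Real.sin_nat_mul_pi]
  have hU := U_real_cos (i * Real.pi / N) (N - 1)
  push_cast at hU
  rw [sub_add_cancel, hsin] at hU
  rw [eval_mul, T_derivative_eq_U, node]
  simp only [eval_sub, eval_one, eval_pow, eval_X, eval_mul, eval_intCast, ← Real.sin_sq]
  push_cast
  linear_combination (N * Real.sin (i * Real.pi / N)) * hU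

theorem eval_derivative_T_node_of_lt {N i : ℕ} (hi0 : 0 < i) (hiN : i < N) :
    (derivative (T ℝ N)).eval (node N i) = 0 := by
  have h := eval_one_sub_X_sq_mul_derivative_T_node N i
  have h1 : node N i < node N 0 := node_lt hiN.le hi0
  have h2 : node N N < node N i := node_lt le_rfl hiN
  rw [node_eq_one] at h1
  rw [node_eq_neg_one (by omega)] at h2
  rw [eval_mul] at h
  refine (mul_eq_zero.mp h).resolve_left ?_
  simp only [eval_sub, eval_one, eval_pow, eval_X]
  nlinarith

theorem eval_derivative_one_sub_X_sq_mul_derivative_T_node {N i : ℕ} (hN : N ≠ 0)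
    (hi : i ≤ N) :
    (derivative ((1 - X ^ 2) * derivative (T ℝ N))).eval (node N i) =
      -((if i = 0 ∨ i = N then 2 else 1) * N ^ 2 * (-1) ^ i) := by
  rw [derivative_one_sub_X_sq_mul_derivative_T]
  simp only [eval_neg, eval_add, eval_mul, eval_X, eval_pow, eval_intCast]
  rcases eq_or_ne i 0 with rfl | hi0
  · simp only [node_eq_one, derivative_T_eval_one, T_eval_one, true_or, ↓reduceIte]
    push_cast
    ring
  rcases eq_or_ne i N with rfl | hiN
  · rw [node_eq_neg_one hN, derivative_T_eval_neg_one, T_eval_neg_one, if_pos (Or.inr rfl)]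
    simp only [Int.coe_negOnePow, Int.cast_natCast, Int.natAbs_natCast]
    ring
  · rw [eval_derivative_T_node_of_lt (Nat.pos_of_ne_zero hi0) (lt_of_le_of_ne hi hiN),
      eval_T_real_node (Finset.mem_Iic.mpr hi), if_neg (by tauto)]
    simp


theorem injOn_node (N : ℕ) :
    Set.InjOn (fun j : Fin (N + 1) => node N j) (univ : Finset (Fin (N + 1))) :=
  fun i _ j _ hij =>
    Fin.ext <| (strictAntiOn_node N).injOn (by simp [i.is_le]) (by simp [j.is_le]) hij

theorem exists_eval_derivative_nodal_node_eq {N : ℕ} (hN : N ≠ 0) :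
    ∃ α : ℝ, α ≠ 0 ∧ ∀ j : Fin (N + 1),
      (if (j : ℕ) = 0 ∨ (j : ℕ) = N then 2 else 1) * (-1) ^ (j : ℕ) =
        α * (derivative (nodal univ fun j : Fin (N + 1) => node N j)).eval (node N j) := by
  set g : ℝ[X] := (1 - X ^ 2) * derivative (T ℝ N)
  have hdeg : g.natDegree ≤ #(univ : Finset (Fin (N + 1))) := by
    simpa using natDegree_one_sub_X_sq_mul_derivative_T_le ℝ N
  obtain ⟨β, hg⟩ : ∃ β, g = Polynomial.C β * nodal univ fun j : Fin (N + 1) => node N j :=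
    ⟨_, eq_C_mul_nodal_of_eval_eq_zero (injOn_node N) hdeg
      fun j _ => eval_one_sub_X_sq_mul_derivative_T_node N j⟩
  have hg' (j : Fin (N + 1)) : (derivative g).eval (node N j) = _ :=
    eval_derivative_one_sub_X_sq_mul_derivative_T_node hN j.is_le
  simp only [hg, derivative_C_mul, eval_mul, eval_C] at hg'
  have hβ : β ≠ 0 := by
    intro h
    simpa [h, hN] using hg' 0
  refine ⟨-β / N ^ 2, by simp [hβ, hN], fun j => ?_⟩
  rw [div_mul_eq_mul_div, neg_mul, hg' j]
  field_simp

end Polynomial.Chebyshev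

open Polynomial.Chebyshev in
/-- the Chebyshev spectral collocation differentiation matrix on the
Gauss–Lobatto grid `x_j = cos(jπ/N)` is exact on polynomials of degree at most `N`:
applied to the nodal values of `p`, it returns the nodal values of `p′`. -/
theorem stmt13 (N : ℕ) (hN : 1 ≤ N)
    (x : Fin (N + 1) → ℝ) (hx : ∀ j : Fin (N + 1), x j = Real.cos (j * Real.pi / N))
    (c : Fin (N + 1) → ℝ)
    (hc : ∀ j : Fin (N + 1), c j = if (j : ℕ) = 0 ∨ (j : ℕ) = N then 2 else 1)
    (D : Matrix (Fin (N + 1)) (Fin (N + 1)) ℝ)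
    (hDoff : ∀ l m : Fin (N + 1), l ≠ m →
      D l m = c l * (-1 : ℝ) ^ ((l : ℕ) + (m : ℕ)) / (c m * (x l - x m)))
    (hDdiag : ∀ l : Fin (N + 1), D l l = -∑ m ∈ Finset.univ.erase l, D l m)
    (p : Polynomial ℝ) (hp : p.natDegree ≤ N) :
    ∀ l : Fin (N + 1),
      (Polynomial.derivative p).eval (x l) = ∑ m : Fin (N + 1), D l m * p.eval (x m) := by
  intro l
  obtain rfl : x = fun j : Fin (N + 1) => node N j := funext hx
  obtain ⟨α, hα, hw⟩ := exists_eval_derivative_nodal_node_eq (by omega : N ≠ 0)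
  have hdeg : p.degree < #(univ : Finset (Fin (N + 1))) := by
    rw [card_univ, Fintype.card_fin]
    exact (degree_le_of_natDegree_le hp).trans_lt (WithBot.coe_lt_coe.mpr N.lt_succ_self)
  refine eval_derivative_eq_sum_of_barycentric_weights (injOn_node N) hα
    (a := fun j => c j * (-1) ^ (j : ℕ)) (fun j _ => by rw [hc]; exact hw j)
    (fun l _ m _ hlm => ?_) (fun l _ => hDdiag l) hdeg (mem_univ l)
  have hxlm : node N l - node N m ≠ 0 :=
    sub_ne_zero.mpr fun h => hlm (injOn_node N (mem_univ l) (mem_univ m) h)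
  have hcm : c m ≠ 0 := by rw [hc]; split_ifs <;> norm_num
  have hsign : ((-1 : ℝ) ^ (m : ℕ)) ^ 2 = 1 := by rw [← pow_mul, mul_comm, pow_mul]; norm_num
  rw [hDoff l m hlm, pow_add]
  field_simp
  rw [hsign, mul_one]
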